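/- Every finite simple graph Γ on a set of d nodes is isomorphic to an induced subgraph of the skeleton of some d-dimensional 0/1 convex polytope, namely P(Γ̄), the polytope of the complement graph: Γ is isomorphic to the subgraph induced by the skeleton of P(Γ̄) on the neighborhood of the vertex χ(∅). -/

import Mathlib

open Set

noncomputable section

variable {V : Type*}

/-- Characteristic vector of a set of nodes. -/
def chi (S : Set V) : V → ℝ := S.indicator (fun _ => (1 : ℝ))

/-- The candidate vertex set of the polytope `P(Γ)`. -/
def polyVerts (G : SimpleGraph V) : Set (V → ℝ) :=
  {x | x = chi (∅ : Set V) ∨ (∃ v : V, x = chi {v}) ∨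
        (∃ u w : V, G.Adj u w ∧ x = chi {u, w})}

/-- The polytope `P(Γ)`. -/
def poly (G : SimpleGraph V) : Set (V → ℝ) := convexHull ℝ (polyVerts G)

/-- Two points are adjacent vertices of a convex set `P` when the segment
joining them is a (1-dimensional) face, i.e. an extreme subset of `P`. -/
def AdjVert (P : Set (V → ℝ)) (p q : V → ℝ) : Prop :=
  p ≠ q ∧ IsExtreme ℝ P (segment ℝ p q)

/-- A combinatorial automorphism of `P`: a bijection of the vertex (extreme point)
set of `P` mapping the vertex set of each face onto the vertex set of some face. -/
def IsCombAut (P : Set (V → ℝ)) (σ : (V → ℝ) → (V → ℝ)) : Prop :=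
  Set.BijOn σ (P.extremePoints ℝ) (P.extremePoints ℝ) ∧
  ∀ F : Set (V → ℝ), IsExtreme ℝ P F →
    ∃ F' : Set (V → ℝ), IsExtreme ℝ P F' ∧
      σ '' (F ∩ P.extremePoints ℝ) = F' ∩ P.extremePoints ℝ

/-- An automorphism of the skeleton of `P`: a bijection of the vertex set of `P`
preserving adjacency (in both directions). -/
def IsSkelAut (P : Set (V → ℝ)) (σ : (V → ℝ) → (V → ℝ)) : Prop :=
  Set.BijOn σ (P.extremePoints ℝ) (P.extremePoints ℝ) ∧
  ∀ p ∈ P.extremePoints ℝ, ∀ q ∈ P.extremePoints ℝ,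
    (AdjVert P p q ↔ AdjVert P (σ p) (σ q))

/-!
The vertices of `P(Γ)` are 0/1 vectors, hence corners of the unit cube and so extreme points.
A segment between two vertices is an edge as soon as some linear functional attains its maximum
over the vertices exactly at its endpoints. It is not an edge when its midpoint is also the
midpoint of two other points of `P(Γ)`; the parallelogram `χ{u} + χ{w} = χ∅ + χ{u,w}` provides
this for every edge `uw` of `Γ`, ruling out both `[χ∅, χ{u,w}]` and `[χ{u}, χ{w}]`.
-/

section Convex

variable {𝕜 E : Type*} [Field 𝕜] [LinearOrder 𝕜] [IsStrictOrderedRing 𝕜]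
  [AddCommGroup E] [Module 𝕜 E]

theorem isExtreme_sep_eq_of_le {A : Set E} (f : E →ₗ[𝕜] 𝕜) {c : 𝕜} (hf : ∀ x ∈ A, f x ≤ c) :
    IsExtreme 𝕜 A {x ∈ A | f x = c} := by
  refine ⟨sep_subset _ _, fun x hx y hy z ⟨_, hz⟩ ⟨a, b, ha, hb, hab, hxyz⟩ => ⟨hx, ?_⟩⟩
  have : a * f x + b * f y = c := by rw [← hz, ← hxyz]; simp
  have hc : a * c + b * c = c := by rw [← add_mul, hab, one_mul]
  have : a * c ≤ a * f x := by linarith [mul_le_mul_of_nonneg_left (hf y hy) hb.le]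
  exact le_antisymm (hf x hx) (le_of_mul_le_mul_left this ha)

theorem IsExtreme.subset_convexHull_inter {S B : Set E} (h : IsExtreme 𝕜 (convexHull 𝕜 S) B) :
    B ⊆ convexHull 𝕜 (B ∩ S) := by
  let U := {x ∈ convexHull 𝕜 S | x ∈ B → x ∈ convexHull 𝕜 (B ∩ S)}
  have hU : Convex 𝕜 U := convex_iff_openSegment_subset.2 fun x hx y hy z hz =>
    ⟨(convex_convexHull 𝕜 S).openSegment_subset hx.1 hy.1 hz, fun hzB =>
      (convex_convexHull 𝕜 _).openSegment_subset (hx.2 (h.2 hx.1 hy.1 hzB hz))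
        (hy.2 (h.2 hy.1 hx.1 hzB (openSegment_symm 𝕜 x y ▸ hz))) hz⟩
  have hSU : S ⊆ U := fun x hx =>
    ⟨subset_convexHull 𝕜 S hx, fun hxB => subset_convexHull 𝕜 _ ⟨hxB, hx⟩⟩
  exact fun x hx => (convexHull_min hSU hU (h.1 hx)).2 hx

theorem isExtreme_segment_convexHull {S : Set E} {p q : E} (f : E →ₗ[𝕜] 𝕜)
    (hp : p ∈ S) (hq : q ∈ S) (hpq : f p = f q)
    (hlt : ∀ x ∈ S, x ≠ p → x ≠ q → f x < f p) :
    IsExtreme 𝕜 (convexHull 𝕜 S) (segment 𝕜 p q) := by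
  have hS : ∀ x ∈ S, f x ≤ f p := fun x hx => by
    by_cases hxp : x = p; · rw [hxp]
    by_cases hxq : x = q; · rw [hxq, hpq]
    exact (hlt x hx hxp hxq).le
  have hF := isExtreme_sep_eq_of_le f fun x hx =>
    convexHull_min hS (convex_halfSpace_le f.isLinear (f p)) hx
  have hFS : {x ∈ convexHull 𝕜 S | f x = f p} ∩ S = {p, q} := by
    ext x
    refine ⟨fun ⟨⟨_, hfx⟩, hx⟩ => ?_, ?_⟩
    · by_contra hx'
      simp only [mem_insert_iff, mem_singleton_iff, not_or] at hx'
      exact (hlt x hx hx'.1 hx'.2).ne hfx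
    · rintro (rfl | rfl)
      exacts [⟨⟨subset_convexHull 𝕜 S hp, rfl⟩, hp⟩, ⟨⟨subset_convexHull 𝕜 S hq, hpq.symm⟩, hq⟩]
  have hseg : segment 𝕜 p q = {x ∈ convexHull 𝕜 S | f x = f p} := by
    rw [← convexHull_pair, ← hFS]
    exact Subset.antisymm (convexHull_min inter_subset_left
      ((convex_convexHull 𝕜 S).inter (convex_hyperplane f.isLinear _))) hF.subset_convexHull_inter
  exact hseg ▸ hF

theorem not_isExtreme_segment_of_add_eq {A : Set E} {p q a b : E} (f : E →ₗ[𝕜] 𝕜)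
    (ha : a ∈ A) (hb : b ∈ A) (hsum : a + b = p + q) (hpq : f p = f q) (hap : f a ≠ f p) :
    ¬ IsExtreme 𝕜 A (segment 𝕜 p q) := by
  intro h
  have hmid : midpoint 𝕜 a b = midpoint 𝕜 p q := by
    simp only [midpoint_eq_smul_add, hsum]
  have haS := h.2 ha hb (hmid ▸ midpoint_mem_segment p q) (midpoint_mem_openSegment a b)
  exact hap ((convex_hyperplane f.isLinear (f p)).segment_subset rfl hpq.symm haS)

end Convex

section GraphPolytope

theorem chi_empty : chi (∅ : Set V) = 0 := indicator_empty _

theorem chi_pair {u w : V} (h : u ≠ w) : chi ({u, w} : Set V) = chi {u} + chi {w} := by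
  rw [chi, insert_eq, indicator_union_of_disjoint (disjoint_singleton.2 h)]; rfl

theorem chi_singleton_injective : Function.Injective (fun u : V => chi ({u} : Set V)) := by
  intro a b h
  by_contra hab
  simpa [chi, hab] using congrFun h a

theorem chi_empty_ne_chi_singleton (u : V) : chi (∅ : Set V) ≠ chi {u} := by
  intro h
  simpa [chi] using congrFun h u

theorem chi_mem_extremePoints_cube (S : Set V) :
    chi S ∈ (univ.pi fun _ : V => Icc (0 : ℝ) 1).extremePoints ℝ := by
  rw [extremePoints_pi]
  intro v _
  rw [extremePoints_Icc zero_le_one]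
  by_cases hv : v ∈ S <;> simp [chi, hv]

theorem poly_subset_cube (G : SimpleGraph V) : poly G ⊆ univ.pi fun _ : V => Icc (0 : ℝ) 1 := by
  refine convexHull_min ?_ (convex_pi fun _ _ => convex_Icc 0 1)
  rintro x (rfl | ⟨u, rfl⟩ | ⟨u, w, -, rfl⟩) <;> exact (chi_mem_extremePoints_cube _).1

theorem chi_mem_extremePoints_poly {G : SimpleGraph V} {S : Set V} (hS : chi S ∈ polyVerts G) :
    chi S ∈ (poly G).extremePoints ℝ :=
  inter_extremePoints_subset_extremePoints_of_subset (poly_subset_cube G)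
    ⟨subset_convexHull ℝ _ hS, chi_mem_extremePoints_cube S⟩

theorem not_isExtreme_segment_chi_empty_chi_pair {G : SimpleGraph V} {u w : V} (h : G.Adj u w) :
    ¬ IsExtreme ℝ (poly G) (segment ℝ (chi ∅) (chi {u, w})) := by
  refine not_isExtreme_segment_of_add_eq
    (LinearMap.proj (R := ℝ) (φ := fun _ : V => ℝ) u - LinearMap.proj w)
    (subset_convexHull ℝ _ (Or.inr (Or.inl ⟨u, rfl⟩)))
    (subset_convexHull ℝ _ (Or.inr (Or.inl ⟨w, rfl⟩)))
    (by rw [chi_empty, zero_add, chi_pair h.ne]) ?_ ?_ <;>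
  simp [chi, h.ne, h.ne.symm]

theorem not_isExtreme_segment_chi_singleton_of_adj {G : SimpleGraph V} {u v : V} (h : G.Adj u v) :
    ¬ IsExtreme ℝ (poly G) (segment ℝ (chi {u}) (chi {v})) := by
  refine not_isExtreme_segment_of_add_eq
    (LinearMap.proj (R := ℝ) (φ := fun _ : V => ℝ) u + LinearMap.proj v)
    (subset_convexHull ℝ _ (Or.inl rfl))
    (subset_convexHull ℝ _ (Or.inr (Or.inr ⟨u, v, h, rfl⟩)))
    (by rw [chi_empty, zero_add, chi_pair h.ne]) ?_ ?_ <;>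
  simp [chi, h.ne, h.ne.symm]

variable [Fintype V]

theorem dotProduct_chi_singleton (c : V → ℝ) (u : V) : c ⬝ᵥ chi {u} = c u := by
  classical
  simp [dotProduct, chi, indicator_apply]

theorem dotProduct_chi_pair (c : V → ℝ) {u w : V} (h : u ≠ w) :
    c ⬝ᵥ chi {u, w} = c u + c w := by
  rw [chi_pair h, dotProduct_add, dotProduct_chi_singleton, dotProduct_chi_singleton]

theorem isExtreme_segment_chi_empty_chi_singleton (G : SimpleGraph V) (u : V) :
    IsExtreme ℝ (poly G) (segment ℝ (chi ∅) (chi {u})) := by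
  classical
  refine isExtreme_segment_convexHull (dotProductBilin ℝ ℝ fun v => if v = u then 0 else -1)
    (Or.inl rfl) (Or.inr (Or.inl ⟨u, rfl⟩)) (by simp [chi_empty, dotProduct_chi_singleton]) ?_
  rintro x (rfl | ⟨w, rfl⟩ | ⟨a, b, hab, rfl⟩) hx0 hxu
  · exact absurd rfl hx0
  · have : w ≠ u := by rintro rfl; exact hxu rfl
    simp [chi_empty, dotProduct_chi_singleton, this]
  · simp only [dotProductBilin_apply_apply, chi_empty, dotProduct_zero,
      dotProduct_chi_pair _ hab.ne]
    grind [hab.ne]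

theorem isExtreme_segment_chi_singleton_of_not_adj {G : SimpleGraph V} {u v : V} (huv : u ≠ v)
    (h : ¬ G.Adj u v) : IsExtreme ℝ (poly G) (segment ℝ (chi {u}) (chi {v})) := by
  classical
  refine isExtreme_segment_convexHull
    (dotProductBilin ℝ ℝ fun w => if w = u ∨ w = v then 1 else -2)
    (Or.inr (Or.inl ⟨u, rfl⟩)) (Or.inr (Or.inl ⟨v, rfl⟩))
    (by simp [dotProduct_chi_singleton]) ?_
  rintro x (rfl | ⟨w, rfl⟩ | ⟨a, b, hab, rfl⟩) hxu hxv
  · simp [chi_empty, dotProduct_chi_singleton]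
  · have hwu : w ≠ u := by rintro rfl; exact hxu rfl
    have hwv : w ≠ v := by rintro rfl; exact hxv rfl
    norm_num [dotProduct_chi_singleton, hwu, hwv]
  · simp only [dotProductBilin_apply_apply, dotProduct_chi_singleton, dotProduct_chi_pair _ hab.ne]
    grind [hab.ne, hab.symm]

theorem isExtreme_segment_chi_singleton_iff {G : SimpleGraph V} {u v : V} (huv : u ≠ v) :
    IsExtreme ℝ (poly G) (segment ℝ (chi {u}) (chi {v})) ↔ ¬ G.Adj u v :=
  ⟨fun h hadj => not_isExtreme_segment_chi_singleton_of_adj hadj h,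
    isExtreme_segment_chi_singleton_of_not_adj huv⟩

end GraphPolytope

theorem stmt11_general [Fintype V] (G : SimpleGraph V) :
    Function.Injective (fun u : V => chi ({u} : Set V)) ∧
    {q | q ∈ (poly Gᶜ).extremePoints ℝ ∧ AdjVert (poly Gᶜ) (chi (∅ : Set V)) q} =
      {x | ∃ u : V, x = chi ({u} : Set V)} ∧
    (∀ u v : V,
      G.Adj u v ↔ AdjVert (poly Gᶜ) (chi ({u} : Set V)) (chi ({v} : Set V))) := by
  refine ⟨chi_singleton_injective, ?_, fun u v => ?_⟩
  · ext q
    constructor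
    · rintro ⟨hq, hne, hext⟩
      rcases extremePoints_convexHull_subset hq with rfl | ⟨u, rfl⟩ | ⟨a, b, hab, rfl⟩
      · exact absurd rfl hne
      · exact ⟨u, rfl⟩
      · exact absurd hext (not_isExtreme_segment_chi_empty_chi_pair hab)
    · rintro ⟨u, rfl⟩
      exact ⟨chi_mem_extremePoints_poly (Or.inr (Or.inl ⟨u, rfl⟩)), chi_empty_ne_chi_singleton u,
        isExtreme_segment_chi_empty_chi_singleton Gᶜ u⟩
  · by_cases huv : u = v
    · subst huv
      simp [AdjVert]
    · rw [AdjVert, isExtreme_segment_chi_singleton_iff huv, SimpleGraph.compl_adj]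
      simp [huv, chi_singleton_injective.ne huv]

theorem stmt11 [Fintype V] [Nonempty V] (G : SimpleGraph V) :
    Function.Injective (fun u : V => chi ({u} : Set V)) ∧
    {q | q ∈ (poly Gᶜ).extremePoints ℝ ∧ AdjVert (poly Gᶜ) (chi (∅ : Set V)) q} =
      {x | ∃ u : V, x = chi ({u} : Set V)} ∧
    (∀ u v : V,
      G.Adj u v ↔ AdjVert (poly Gᶜ) (chi ({u} : Set V)) (chi ({v} : Set V))) :=
  stmt11_general G
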